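/- arXiv:2306.00308 — 5 statements merged into one kernel-verified Lean document; each statement's English description precedes it below -/
import Mathlib

section
/- Let F be a field, t a natural number, S a finite set of pairwise distinct nonzero elements of F with |S| = t, and y : S → F an arbitrary assignment of share values. Then for every a ∈ F there exists exactly one polynomial f ∈ F[X] with degree f ≤ t, f(0) = a, and f(x) = y(x) for all x ∈ S. Consequently, any collection of t shares of a threshold-t Shamir sharing is consistent with every possible value of the secret. -/
/-- Any `t` shares of a threshold-`t` Shamir sharing are consistent with every
possible secret: for any finite set `S` of pairwise distinct nonzero points with
`|S| = t`, any share values `y`, and any secret `a`, there is exactly one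
polynomial `f` with `degree f ≤ t`, `f(0) = a`, and `f(x) = y x` for `x ∈ S`. -/
theorem shamir_interpolation_unique (F : Type*) [Field F] (t : ℕ) (S : Finset F)
    (hS : ∀ x ∈ S, x ≠ 0) (hcard : S.card = t) (y : F → F) (a : F) :
    ∃! f : Polynomial F,
      f.degree ≤ (t : WithBot ℕ) ∧ f.eval 0 = a ∧ ∀ x ∈ S, f.eval x = y x := by
  classical
  set S' : Finset F := insert 0 S with hS'
  have h0 : (0 : F) ∉ S := fun h => hS 0 h rfl
  have hcard' : S'.card = t + 1 := by
    rw [hS', Finset.card_insert_of_notMem h0, hcard]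
  set v : F → F := fun x => if x = 0 then a else y x with hv
  have hinj : Set.InjOn id (S' : Set F) := Function.injective_id.injOn
  have hdeg : ∀ f : Polynomial F, f.degree ≤ (t : WithBot ℕ) ↔ f.degree < S'.card := by
    intro f
    rw [hcard']
    cases h : f.degree with
    | bot =>
      simp only [bot_le, true_iff]
      exact bot_lt_iff_ne_bot.mpr (by simp [Nat.cast_withBot])
    | coe n =>
      rw [Nat.cast_withBot, Nat.cast_withBot, WithBot.coe_le_coe, WithBot.coe_lt_coe]
      exact Nat.lt_succ_iff.symm
  have key : ∀ f : Polynomial F,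
      (f.degree ≤ (t : WithBot ℕ) ∧ f.eval 0 = a ∧ ∀ x ∈ S, f.eval x = y x) ↔
      (f.degree < S'.card ∧ ∀ x ∈ S', f.eval (id x) = v x) := by
    intro f
    constructor
    · rintro ⟨h1, h2, h3⟩
      refine ⟨(hdeg f).mp h1, ?_⟩
      intro x hx
      rcases Finset.mem_insert.mp hx with rfl | hx
      · simpa [hv] using h2
      · simp only [id, hv, if_neg (hS x hx)]
        exact h3 x hx
    · rintro ⟨h1, h2⟩
      refine ⟨(hdeg f).mpr h1, ?_, ?_⟩
      · simpa [hv] using h2 0 (Finset.mem_insert_self 0 S)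
      · intro x hx
        have := h2 x (Finset.mem_insert_of_mem hx)
        simpa [hv, hS x hx] using this
  refine ⟨Lagrange.interpolate S' id v, ?_, ?_⟩
  · exact (key _).mpr ⟨Lagrange.degree_interpolate_lt _ hinj,
      fun x hx => Lagrange.eval_interpolate_at_node _ hinj hx⟩
  · intro f hf
    obtain ⟨h1, h2⟩ := (key f).mp hf
    exact Lagrange.eq_interpolate_of_eval_eq _ hinj h1 h2
end

section
/- Let F be a finite field with |F| = q, let t be a natural number, let S be a finite set of pairwise distinct nonzero elements of F with |S| = s and s ≤ t, let y : S → F be an assignment of share values, and let a ∈ F. Then the number of polynomials f ∈ F[X] with degree f ≤ t, f(0) = a, and f(x) = y(x) for all x ∈ S equals q^(t − s). In particular this count is independent of the secret a, so a coalition holding at most t shares of a threshold-t Shamir sharing learns nothing about the secret: every value of the secret is consistent with the observed shares in exactly the same number of ways. -/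
open Polynomial

private lemma deg_lt_succ_aux {F : Type*} [Field F] {p : Polynomial F} {n : ℕ}
    (h : p.degree < ((n + 1 : ℕ) : WithBot ℕ)) : p.degree ≤ (n : WithBot ℕ) := by
  rcases eq_or_ne p 0 with rfl | hp
  · simp
  · rw [degree_eq_natDegree hp] at h ⊢
    exact_mod_cast Nat.lt_succ_iff.1 (by exact_mod_cast h)

/-- Perfect privacy of Shamir secret sharing, counting version: over a finite
field with `q` elements, the number of polynomials of degree `≤ t` with
`f(0) = a` agreeing with given share values `y` on a set `S` of `s ≤ t`
pairwise distinct nonzero points is `q^(t - s)`, independently of `a`. -/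
theorem shamir_privacy_count (F : Type*) [Field F] [Fintype F] (q t s : ℕ)
    (hq : Fintype.card F = q) (S : Finset F) (hS : ∀ x ∈ S, x ≠ 0)
    (hcard : S.card = s) (hst : s ≤ t) (y : F → F) (a : F) :
    {f : Polynomial F |
        f.degree ≤ (t : WithBot ℕ) ∧ f.eval 0 = a ∧ ∀ x ∈ S, f.eval x = y x}.ncard
      = q ^ (t - s) := by
  classical
  have h0S : (0 : F) ∉ S := fun h => hS 0 h rfl
  set T : Finset F := insert 0 S with hT
  have hTcard : T.card = s + 1 := by rw [hT, Finset.card_insert_of_notMem h0S, hcard]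
  set y' : F → F := Function.update y 0 a with hy'
  set f₀ : Polynomial F := Lagrange.interpolate T id y' with hf₀
  have hinj : Set.InjOn id (T : Set F) := Function.injective_id.injOn
  have hf₀eval : ∀ x ∈ T, f₀.eval x = y' x := fun x hx =>
    Lagrange.eval_interpolate_at_node _ hinj hx
  have hf₀deg : f₀.degree < ((s + 1 : ℕ) : WithBot ℕ) := by
    rw [hf₀]
    have := Lagrange.degree_interpolate_lt (r := y') hinj
    rwa [hTcard] at this
  have hf₀degt : f₀.degree ≤ (t : WithBot ℕ) :=
    (deg_lt_succ_aux hf₀deg).trans (by exact_mod_cast hst)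
  set P : Polynomial F := ∏ x ∈ T, (X - C x) with hP
  have hPmonic : P.Monic := monic_prod_of_monic _ _ fun x _ => monic_X_sub_C x
  have hPne : P ≠ 0 := hPmonic.ne_zero
  have hPdeg : P.degree = ((s + 1 : ℕ) : WithBot ℕ) := by
    rw [hP, degree_prod]
    simp [degree_X_sub_C, hTcard]
  have hPeval : ∀ x ∈ T, P.eval x = 0 := by
    intro x hx
    rw [hP, eval_prod]
    exact Finset.prod_eq_zero hx (by simp)
  have h0T : (0 : F) ∈ T := Finset.mem_insert_self 0 S
  have key : Set.BijOn (fun g => f₀ + g * P)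
      {g : Polynomial F | g.degree < ((t - s : ℕ) : WithBot ℕ)}
      {f : Polynomial F | f.degree ≤ (t : WithBot ℕ) ∧ f.eval 0 = a ∧ ∀ x ∈ S, f.eval x = y x} := by
    refine ⟨?_, ?_, ?_⟩
    · intro g hg
      simp only [Set.mem_setOf_eq] at hg ⊢
      refine ⟨?_, ?_, ?_⟩
      · refine (degree_add_le _ _).trans (max_le hf₀degt ?_)
        rcases eq_or_ne g 0 with rfl | hg0
        · simp
        · have hgP : (g * P).degree < ((t + 1 : ℕ) : WithBot ℕ) := by
            rw [degree_mul, hPdeg]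
            have hlt : g.degree + ((s + 1 : ℕ) : WithBot ℕ)
                < ((t - s : ℕ) : WithBot ℕ) + ((s + 1 : ℕ) : WithBot ℕ) :=
              WithBot.add_lt_add_right (by simp) hg
            rw [← Nat.cast_add] at hlt
            have h2 : (t - s) + (s + 1) = t + 1 := by omega
            rwa [h2] at hlt
          exact deg_lt_succ_aux hgP
      · rw [eval_add, eval_mul, hPeval 0 h0T, mul_zero, add_zero, hf₀eval 0 h0T, hy',
          Function.update_self]
      · intro x hx
        have hxT : x ∈ T := Finset.mem_insert_of_mem hx
        rw [eval_add, eval_mul, hPeval x hxT, mul_zero, add_zero, hf₀eval x hxT, hy',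
          Function.update_of_ne (hS x hx)]
    · intro g1 _ g2 _ he
      simp only at he
      exact mul_right_cancel₀ hPne (add_left_cancel he)
    · rintro f ⟨hfd, hf0, hfS⟩
      have hroot : ∀ x ∈ T, (f - f₀).eval x = 0 := by
        intro x hx
        rcases Finset.mem_insert.1 hx with rfl | hxS
        · rw [eval_sub, hf0, hf₀eval 0 h0T, hy', Function.update_self, sub_self]
        · rw [eval_sub, hfS x hxS, hf₀eval x hx, hy', Function.update_of_ne (hS x hxS), sub_self]
      rcases eq_or_ne (f - f₀) 0 with hz | hz
      · refine ⟨0, ?_, ?_⟩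
        · simp only [Set.mem_setOf_eq, degree_zero]
          exact WithBot.bot_lt_coe _
        · simp only [zero_mul, add_zero]
          exact (sub_eq_zero.1 hz).symm
      · have hdvd : P ∣ f - f₀ := by
          have hle : T.val ≤ (f - f₀).roots :=
            (Multiset.le_iff_subset T.nodup).2 fun x hx =>
              (mem_roots hz).2 (hroot x hx)
          have := (Multiset.prod_X_sub_C_dvd_iff_le_roots hz T.val).2 hle
          rw [hP, Finset.prod_eq_multiset_prod]
          exact this
        obtain ⟨g, hg⟩ := hdvd
        refine ⟨g, ?_, ?_⟩
        · simp only [Set.mem_setOf_eq]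
          have hgne : g ≠ 0 := by rintro rfl; simp [hg] at hz
          have hd : (f - f₀).degree ≤ (t : WithBot ℕ) :=
            (degree_sub_le _ _).trans (max_le hfd hf₀degt)
          rw [hg, degree_mul, hPdeg, degree_eq_natDegree hgne] at hd
          rw [← Nat.cast_add] at hd
          have hnd : s + 1 + g.natDegree ≤ t := by exact_mod_cast hd
          rw [degree_eq_natDegree hgne]
          exact_mod_cast (by omega : g.natDegree < t - s)
        · simp only
          rw [mul_comm, ← hg]; ring
  rw [← key.image_eq, Set.ncard_image_of_injOn key.injOn]
  have hset : {g : Polynomial F | g.degree < ((t - s : ℕ) : WithBot ℕ)}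
      = (degreeLT F (t - s) : Set (Polynomial F)) := by
    ext g; simp [Polynomial.mem_degreeLT]
  rw [hset, ← Nat.card_coe_set_eq]
  show Nat.card (degreeLT F (t - s)) = q ^ (t - s)
  rw [Nat.card_congr (degreeLTEquiv F (t - s)).toEquiv]
  simp [Nat.card_eq_fintype_card, hq]
end

section
/- Let F be a field, let t and q be natural numbers with 2t < q, let S be a finite set of pairwise distinct nonzero elements of F with |S| = q, and let f_a, f_b ∈ F[X] be polynomials with degree f_a ≤ t and degree f_b ≤ t. Then f_a(0) · f_b(0) = Σ_{x ∈ S} λ_x · (f_a(x) · f_b(x)), where λ_x = ∏_{x' ∈ S, x' ≠ x} x'/(x' − x). That is, when each of q parties locally multiplies its two threshold-t Shamir shares, the resulting values are evaluations of the degree-≤2t polynomial f_a·f_b, and the product of the two secrets is recovered as the λ-weighted linear combination of these local products. -/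
/-- Local multiplication of threshold-`t` Shamir shares: with `2t < q` parties
holding shares at the pairwise distinct nonzero points of `S` (`|S| = q`), the
product of the two secrets is the `λ`-weighted combination of the local
products `f_a(x)·f_b(x)`. -/
theorem shamir_local_product (F : Type*) [Field F] [DecidableEq F] (t q : ℕ) (htq : 2 * t < q)
    (S : Finset F) (hS : ∀ x ∈ S, x ≠ 0) (hcard : S.card = q)
    (fa fb : Polynomial F) (hfa : fa.degree ≤ (t : WithBot ℕ))
    (hfb : fb.degree ≤ (t : WithBot ℕ)) :
    fa.eval 0 * fb.eval 0
      = ∑ x ∈ S, (∏ x' ∈ S.erase x, x' / (x' - x)) * (fa.eval x * fb.eval x) := by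
  have hinj : Set.InjOn id (S : Set F) := Function.injective_id.injOn
  have hdeg : (fa * fb).degree < (S.card : WithBot ℕ) := by
    calc (fa * fb).degree ≤ fa.degree + fb.degree := Polynomial.degree_mul_le _ _
      _ ≤ (t : WithBot ℕ) + t := add_le_add hfa hfb
      _ < (S.card : WithBot ℕ) := by
          rw [hcard]
          norm_cast
          omega
  have key := Lagrange.eq_interpolate hinj hdeg
  have := congrArg (Polynomial.eval 0) key
  rw [Lagrange.interpolate_apply, Polynomial.eval_finset_sum] at this
  rw [← Polynomial.eval_mul, this]
  refine Finset.sum_congr rfl fun x hx => ?_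
  rw [Polynomial.eval_mul, Polynomial.eval_C, Polynomial.eval_mul]
  have hb : Polynomial.eval 0 (Lagrange.basis S id x)
      = ∏ x' ∈ S.erase x, x' / (x' - x) := by
    rw [Lagrange.basis, Polynomial.eval_prod]
    refine Finset.prod_congr rfl fun y hy => ?_
    have hxy : (x : F) ≠ y := fun h => (Finset.mem_erase.mp hy).1 h.symm
    simp only [Lagrange.basisDivisor, Polynomial.eval_mul, Polynomial.eval_C,
      Polynomial.eval_sub, Polynomial.eval_X, id]
    rw [zero_sub, div_eq_mul_inv, mul_comm]
    rw [← neg_sub y x, inv_neg, neg_mul, mul_neg, neg_neg]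
  simp only [id]
  rw [hb]; ring
end

section
/- (Correctness of the Gennaro–Rabin–Rabin multiplication protocol with degree reduction.) Let F be a field, let t and q be natural numbers with 2t < q, and let p : Fin q → F be an injective assignment of pairwise distinct nonzero evaluation points to the q parties. Let f_a, f_b ∈ F[X] have degree ≤ t, encoding secrets a = f_a(0) and b = f_b(0). Suppose each party i re-shares its local product by choosing a polynomial h_i ∈ F[X] with degree h_i ≤ t and h_i(0) = f_a(p i) · f_b(p i), and define H = Σ_i λ_i • h_i where λ_i = ∏_{j ≠ i} p j/(p j − p i). Then H has degree ≤ t and H(0) = a · b; i.e., the values H(p k) held by the parties after the protocol are the shares of a threshold-t Shamir sharing of the product a·b. -/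
/-- Correctness of the Gennaro–Rabin–Rabin multiplication protocol with degree
reduction: if each party `i` re-shares its local product `f_a(p i) · f_b(p i)`
with a degree-`≤ t` polynomial `h i`, then `H = Σ_i λ_i • h i` is a degree-`≤ t`
sharing polynomial of the product of the secrets, i.e. `H(0) = f_a(0) · f_b(0)`. -/
theorem grr_multiplication_correct (F : Type*) [Field F] (t q : ℕ) (htq : 2 * t < q)
    (p : Fin q → F) (hp : Function.Injective p) (hp0 : ∀ i, p i ≠ 0)
    (fa fb : Polynomial F) (hfa : fa.degree ≤ (t : WithBot ℕ))
    (hfb : fb.degree ≤ (t : WithBot ℕ))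
    (h : Fin q → Polynomial F) (hdeg : ∀ i, (h i).degree ≤ (t : WithBot ℕ))
    (h0 : ∀ i, (h i).eval 0 = fa.eval (p i) * fb.eval (p i)) :
    (∑ i, (∏ j ∈ Finset.univ.erase i, p j / (p j - p i)) • h i).degree ≤ (t : WithBot ℕ)
      ∧ (∑ i, (∏ j ∈ Finset.univ.erase i, p j / (p j - p i)) • h i).eval 0
          = fa.eval 0 * fb.eval 0 := by
  constructor
  · refine (Polynomial.degree_sum_le _ _).trans ?_
    rw [Finset.sup_le_iff]
    intro i _
    exact (Polynomial.degree_smul_le _ _).trans (hdeg i)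
  · have hinj : Set.InjOn p ↑(Finset.univ : Finset (Fin q)) := hp.injOn
    have hdlt : (fa * fb).degree < ((Finset.univ : Finset (Fin q)).card : WithBot ℕ) := by
      rw [Finset.card_univ, Fintype.card_fin]
      calc (fa * fb).degree ≤ fa.degree + fb.degree := Polynomial.degree_mul_le _ _
        _ ≤ (t : WithBot ℕ) + t := add_le_add hfa hfb
        _ < (q : WithBot ℕ) := by
            rw [← Nat.cast_add]
            exact_mod_cast (by omega : t + t < q)
    have key := congrArg (Polynomial.eval 0) (Lagrange.eq_interpolate hinj hdlt)
    rw [Polynomial.eval_mul, Lagrange.interpolate_apply, Polynomial.eval_finset_sum] at key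
    have hbasis : ∀ i : Fin q, (Lagrange.basis Finset.univ p i).eval 0
        = ∏ j ∈ Finset.univ.erase i, p j / (p j - p i) := by
      intro i
      rw [Lagrange.basis, Polynomial.eval_prod]
      refine Finset.prod_congr rfl fun j hj => ?_
      have hne : p j - p i ≠ 0 := by
        have : j ≠ i := (Finset.mem_erase.mp hj).1
        exact sub_ne_zero_of_ne (fun e => this (hp e))
      simp only [Lagrange.basisDivisor, Polynomial.eval_mul, Polynomial.eval_C,
        Polynomial.eval_sub, Polynomial.eval_X]
      rw [zero_sub, div_eq_mul_inv, ← neg_sub (p j) (p i), inv_neg]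
      ring
    simp only [Polynomial.eval_mul, Polynomial.eval_C] at key
    rw [Polynomial.eval_finset_sum]
    simp only [Polynomial.eval_smul, smul_eq_mul, h0]
    rw [key]
    refine Finset.sum_congr rfl fun i _ => ?_
    rw [hbasis i]
    ring
end

section
/- Let F be a field, t a natural number, S a finite set of pairwise distinct nonzero elements of F with |S| ≤ t, and y : S → F an assignment of share values. Then for any two secrets a, a' ∈ F, the map f ↦ f + (a' − a) · g, where g = ∏_{x ∈ S} (1 − X/x), is a bijection from the set of polynomials f ∈ F[X] with degree f ≤ t, f(0) = a, and f(x) = y(x) for all x ∈ S onto the corresponding set with f(0) = a'. In particular these two sets of consistent sharing polynomials are in bijection, so at most t shares of a threshold-t Shamir sharing make all values of the secret equally likely. -/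
/-!
Adding `(a' - a) · g` with `g = ∏_{x ∈ S} (1 - X/x)` keeps the degree bound (`deg g ≤ |S| ≤ t`)
and the shares (`g` vanishes on `S`), and moves the secret from `a` to `a'` since `g(0) = 1`.
Subtracting the same polynomial inverts the map, so it is a bijection.
-/

open Polynomial

namespace Polynomial

section Sharing

variable {R : Type*} [Ring R]

def sharingPolys (t : ℕ) (S : Finset R) (y : R → R) (a : R) : Set R[X] :=
  {f | f.degree ≤ t ∧ f.eval 0 = a ∧ ∀ x ∈ S, f.eval x = y x}

variable {t : ℕ} {S : Finset R} {y : R → R} {h : R[X]}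

theorem add_mem_sharingPolys (hdeg : h.degree ≤ t) (hS : ∀ x ∈ S, h.eval x = 0) {a : R}
    {f : R[X]} (hf : f ∈ sharingPolys t S y a) : f + h ∈ sharingPolys t S y (a + h.eval 0) := by
  obtain ⟨hf_deg, hf_secret, hf_shares⟩ := hf
  refine ⟨(degree_add_le f h).trans (max_le hf_deg hdeg), by rw [eval_add, hf_secret], ?_⟩
  intro x hx
  rw [eval_add, hf_shares x hx, hS x hx, add_zero]

theorem bijOn_add_sharingPolys (hdeg : h.degree ≤ t) (hS : ∀ x ∈ S, h.eval x = 0) (a : R) :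
    Set.BijOn (· + h) (sharingPolys t S y a) (sharingPolys t S y (a + h.eval 0)) := by
  have hneg_maps : Set.MapsTo (· + -h) (sharingPolys t S y (a + h.eval 0))
      (sharingPolys t S y a) := by
    intro f hf
    have := add_mem_sharingPolys (h := -h) (by rwa [degree_neg]) (by simpa using hS) hf
    rwa [eval_neg, add_neg_cancel_right] at this
  exact Set.InvOn.bijOn ⟨fun f _ => add_neg_cancel_right f h, fun f _ => neg_add_cancel_right f h⟩
    (fun f hf => add_mem_sharingPolys hdeg hS hf) hneg_maps

end Sharing

theorem degree_prod_one_sub_C_mul_X_le {R ι : Type*} [CommRing R] (s : Finset ι) (c : ι → R) :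
    (∏ i ∈ s, (1 - C (c i) * X)).degree ≤ (s.card : WithBot ℕ) := by
  refine (degree_le_natDegree).trans (WithBot.coe_le_coe.mpr ?_)
  calc (∏ i ∈ s, (1 - C (c i) * X)).natDegree
      ≤ ∑ i ∈ s, (1 - C (c i) * X).natDegree := natDegree_prod_le s _
    _ ≤ s.card • 1 := Finset.sum_le_card_nsmul _ _ _ fun i _ => by compute_degree
    _ = s.card := smul_eq_mul .. |>.trans (mul_one _)

theorem eval_zero_prod_one_sub_C_mul_X {R ι : Type*} [CommRing R] (s : Finset ι) (c : ι → R) :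
    (∏ i ∈ s, (1 - C (c i) * X)).eval 0 = 1 := by
  simp [eval_prod]

theorem eval_prod_one_sub_C_inv_mul_X_of_mem {F : Type*} [Field F] {S : Finset F} {x : F}
    (hx : x ∈ S) (hx0 : x ≠ 0) : (∏ z ∈ S, (1 - C z⁻¹ * X)).eval x = 0 := by
  rw [eval_prod]
  exact Finset.prod_eq_zero hx (by simp [inv_mul_cancel₀ hx0])

end Polynomial

/-- Perfect privacy of Shamir secret sharing, bijection version: for a set `S`
of at most `t` pairwise distinct nonzero points with share values `y`, the map
`f ↦ f + (a' − a) · g` with `g = ∏_{x ∈ S} (1 − X/x)` is a bijection from the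
sharing polynomials consistent with secret `a` onto those consistent with
secret `a'`. -/
theorem shamir_privacy_bijection (F : Type*) [Field F] (t : ℕ) (S : Finset F)
    (hS : ∀ x ∈ S, x ≠ 0) (hcard : S.card ≤ t) (y : F → F) (a a' : F) :
    Set.BijOn
      (fun f : Polynomial F =>
        f + Polynomial.C (a' - a) * ∏ x ∈ S, (1 - Polynomial.C x⁻¹ * Polynomial.X))
      {f | f.degree ≤ (t : WithBot ℕ) ∧ f.eval 0 = a ∧ ∀ x ∈ S, f.eval x = y x}
      {f | f.degree ≤ (t : WithBot ℕ) ∧ f.eval 0 = a' ∧ ∀ x ∈ S, f.eval x = y x} := by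
  set g : F[X] := ∏ x ∈ S, (1 - C x⁻¹ * X)
  have hg_deg : (C (a' - a) * g).degree ≤ t := calc
    (C (a' - a) * g).degree ≤ g.degree := by rw [← smul_eq_C_mul]; exact degree_smul_le _ _
    _ ≤ (S.card : WithBot ℕ) := degree_prod_one_sub_C_mul_X_le S _
    _ ≤ t := by exact_mod_cast hcard
  have hg_shares : ∀ x ∈ S, (C (a' - a) * g).eval x = 0 := fun x hx => by
    rw [eval_mul, eval_prod_one_sub_C_inv_mul_X_of_mem hx (hS x hx), mul_zero]
  have hbij := bijOn_add_sharingPolys (y := y) hg_deg hg_shares a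
  rwa [eval_mul, eval_C, eval_zero_prod_one_sub_C_mul_X, mul_one, add_sub_cancel] at hbij
end
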